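/- arXiv:1203.1527 — 5 statements merged into one kernel-verified Lean document; each statement's English description precedes it below -/
import Mathlib

section
/- If C is a binary linear [48,k] code all of whose nonzero codewords have Hamming weight exactly 16 (a constant-weight-16 code of length 48), then k ≤ 5. -/
/-- Hamming weight of a binary vector. -/
def wt {n : ℕ} (x : Fin n → ZMod 2) : ℕ :=
  (Finset.univ.filter fun i => x i ≠ 0).card

/-- Dual code with respect to the standard bilinear form. -/
def dualCode {n : ℕ} (C : Submodule (ZMod 2) (Fin n → ZMod 2)) :
    Submodule (ZMod 2) (Fin n → ZMod 2) where
  carrier := {x | ∀ c ∈ C, ∑ i, x i * c i = 0}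
  add_mem' := by
    intro a b ha hb c hc
    have ha' := ha c hc
    have hb' := hb c hc
    simp only [Set.mem_setOf_eq, Pi.add_apply, add_mul] at *
    rw [Finset.sum_add_distrib, ha', hb', add_zero]
  zero_mem' := by
    intro c hc
    simp
  smul_mem' := by
    intro r a ha c hc
    have ha' := ha c hc
    simp only [Set.mem_setOf_eq, Pi.smul_apply, smul_eq_mul, mul_assoc] at *
    rw [← Finset.mul_sum, ha', mul_zero]

/-- Minimum distance (minimum nonzero Hamming weight) of a binary linear code. -/
noncomputable def minDist {n : ℕ} (C : Submodule (ZMod 2) (Fin n → ZMod 2)) : ℕ :=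
  sInf {w | ∃ c ∈ C, c ≠ 0 ∧ wt c = w}

/-- Number of codewords of weight `w` in `C` (the weight distribution `A_w`). -/
noncomputable def wtCount {n : ℕ} (C : Submodule (ZMod 2) (Fin n → ZMod 2)) (w : ℕ) : ℕ :=
  Nat.card {c : Fin n → ZMod 2 // c ∈ C ∧ wt c = w}

/-! A coordinate functional is either zero on `C` or takes the value `1` on exactly half of `C`,
so counting the pairs (codeword, nonzero coordinate) column by column shows that `|C|` divides
`2 ∑_{c ∈ C} wt c`. For a constant-weight-`w` code this sum is `w (|C| - 1)`, hence `|C| = 2^k`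
divides `2w`; with `w = 16` this gives `2^k ∣ 32`. -/

open Finset

theorem card_dvd_two_mul_card_filter_ne_zero {G : Type*} [AddGroup G] [Fintype G]
    (f : G →+ ZMod 2) : Fintype.card G ∣ 2 * #{g | f g ≠ 0} := by
  by_cases hf : ∃ g, f g ≠ 0
  · obtain ⟨g₀, hg₀⟩ := hf
    have hfiber : #{g | f g = 0} = #{g | f g ≠ 0} := by
      have hne_zero_iff : ∀ a : ZMod 2, a ≠ 0 ↔ a = 1 := by decide
      simp only [hne_zero_iff] at hg₀ ⊢
      exact AddMonoidHom.card_fiber_eq_of_mem_range f ⟨0, map_zero f⟩ ⟨g₀, hg₀⟩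
    rw [← card_univ, ← card_filter_add_card_filter_not (fun g => f g = 0), hfiber, two_mul]
  · push Not at hf
    simp [hf]

theorem sum_wt_eq_sum_card_filter {α : Type*} [Fintype α] {n : ℕ} (v : α → Fin n → ZMod 2) :
    ∑ a, wt (v a) = ∑ i, #{a | v a i ≠ 0} := by
  simp only [wt, card_filter]
  exact sum_comm

theorem card_dvd_two_mul_sum_wt {n : ℕ} (C : Submodule (ZMod 2) (Fin n → ZMod 2))
    [Fintype C] : Fintype.card C ∣ 2 * ∑ c : C, wt (c : Fin n → ZMod 2) := by
  rw [sum_wt_eq_sum_card_filter ((↑) : C → Fin n → ZMod 2), mul_sum]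
  exact dvd_sum fun i _ =>
    card_dvd_two_mul_card_filter_ne_zero ((LinearMap.proj i).comp C.subtype).toAddMonoidHom

theorem sum_wt_add_eq_mul_card {n w : ℕ} (C : Submodule (ZMod 2) (Fin n → ZMod 2)) [Fintype C]
    (hw : ∀ c ∈ C, c ≠ 0 → wt c = w) :
    ∑ c : C, wt (c : Fin n → ZMod 2) + w = w * Fintype.card C := by
  have hterm : ∀ c : C, wt (c : Fin n → ZMod 2) + (if c = 0 then w else 0) = w := by
    intro c
    by_cases hc : c = 0
    · simp [hc, wt]
    · simp [hc, hw c c.2 (by simpa using hc)]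
  calc ∑ c : C, wt (c : Fin n → ZMod 2) + w
      = ∑ c : C, (wt (c : Fin n → ZMod 2) + if c = 0 then w else 0) := by
        rw [sum_add_distrib, sum_ite_eq' univ (0 : C) fun _ => w, if_pos (mem_univ _)]
    _ = w * Fintype.card C := by simp [hterm, mul_comm]

theorem card_dvd_two_mul_of_forall_wt_eq {n w : ℕ} (C : Submodule (ZMod 2) (Fin n → ZMod 2))
    [Fintype C] (hw : ∀ c ∈ C, c ≠ 0 → wt c = w) : Fintype.card C ∣ 2 * w := by
  refine (Nat.dvd_add_right (card_dvd_two_mul_sum_wt C)).mp ?_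
  rw [← mul_add, sum_wt_add_eq_mul_card C hw, ← mul_assoc]
  exact dvd_mul_left _ _

/-- A binary linear [48,k] code all of whose nonzero codewords have weight 16
has dimension k ≤ 5. -/
theorem stmt_0 (C : Submodule (ZMod 2) (Fin 48 → ZMod 2)) (k : ℕ)
    (hk : Module.finrank (ZMod 2) C = k)
    (hw : ∀ c ∈ C, c ≠ 0 → wt c = 16) : k ≤ 5 := by
  classical
  have hcard : Fintype.card C = 2 ^ k := by
    rw [Module.card_eq_pow_finrank (K := ZMod 2), ZMod.card, hk]
  have hdvd := card_dvd_two_mul_of_forall_wt_eq C hw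
  rw [hcard, show 2 * 16 = 2 ^ 5 by norm_num] at hdvd
  exact (Nat.pow_dvd_pow_iff_le_right (by norm_num)).mp hdvd
end

section
/- There does not exist a binary linear [48,17] code C such that every nonzero codeword of C has Hamming weight in the set {16, 20, 24, 28, 32, 48} and C contains the all-one vector (i.e., C is self-complementary with those doubly-even weights). -/
/-! Delsarte's linear-programming bound with an explicit dual certificate.

For integers `λ_r`, `b_r` put `T(w) = ∑_r λ_r (32 + b_r)^(48-w) (32 - b_r)^w` (`lpValue`).
Expanding the product `∏_i (32 + b_r (-1)^{c_i}) = (32 + b_r)^(48 - wt c) (32 - b_r)^(wt c)` over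
subsets `S` of the coordinates writes `T(wt c)` as `∑_S q(|S|) (-1)^{∑_{i ∈ S} c_i}` with
`q(u) = ∑_r λ_r 32^(48-u) b_r^u` (`lpCoeff`). Character sums over a linear code are `0` or `|C|`,
so `q ≥ 0` forces `∑_{c ∈ C} T(wt c) ≥ 0`. With `b_r` ranging over
`0, ±1, ±2, ±3, ±4, ±6, ±8, ±12, ±16` and suitable `λ_r`, `q ≥ 0` while `T` is so negative at the
weights `16, …, 32` that the `2^17 - 2` codewords other than `0` and `𝟙` outweigh `T(0) + T(48)`. -/

namespace BinaryCode

open Finset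

def signChar (t : ZMod 2) : ℤ := if t = 0 then 1 else -1

theorem signChar_add : ∀ s t : ZMod 2, signChar (s + t) = signChar s * signChar t := by decide

theorem signChar_sum {ι : Type*} (s : Finset ι) (f : ι → ZMod 2) :
    signChar (∑ i ∈ s, f i) = ∏ i ∈ s, signChar (f i) := by
  classical
  induction s using Finset.induction_on with
  | empty => rfl
  | insert a s ha ih => rw [sum_insert ha, prod_insert ha, signChar_add, ih]

theorem eq_one_of_ne_zero : ∀ t : ZMod 2, t ≠ 0 → t = 1 := by decide

theorem sum_signChar_nonneg {G : Type*} [AddGroup G] [Fintype G] (φ : G →+ ZMod 2) :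
    0 ≤ ∑ g, signChar (φ g) := by
  by_cases h : ∀ g, φ g = 0
  · simp [h, signChar]
  push Not at h
  obtain ⟨g₀, hg₀⟩ := h
  -- translating by `g₀` flips every sign
  have hflip : ∑ g, signChar (φ g) = -∑ g, signChar (φ g) := by
    rw [← sum_neg_distrib, ← Equiv.sum_comp (Equiv.addRight g₀)]
    refine sum_congr rfl fun g _ => ?_
    rw [Equiv.coe_addRight, map_add, signChar_add, eq_one_of_ne_zero _ hg₀]
    simp [signChar]
  linarith

variable {n : ℕ}

theorem wt_zero : wt (0 : Fin n → ZMod 2) = 0 := by simp [wt]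

theorem wt_one : wt (fun _ => (1 : ZMod 2) : Fin n → ZMod 2) = n := by simp [wt]

theorem eq_one_of_wt_eq {c : Fin n → ZMod 2} (h : wt c = n) : c = fun _ => 1 := by
  have huniv : univ.filter (fun i => c i ≠ 0) = univ := by
    rw [← card_eq_iff_eq_univ, Fintype.card_fin]
    exact h
  funext i
  have hi : i ∈ univ.filter (fun i => c i ≠ 0) := by
    rw [huniv]
    exact mem_univ i
  exact eq_one_of_ne_zero _ (mem_filter.mp hi).2

theorem prod_add_mul_signChar_eq_sum_powerset (a b : ℤ) (c : Fin n → ZMod 2) :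
    ∏ i, (a + b * signChar (c i)) =
      ∑ S ∈ univ.powerset, a ^ (n - #S) * b ^ #S * signChar (∑ i ∈ S, c i) := by
  simp_rw [add_comm a, prod_add]
  refine sum_congr rfl fun S _ => ?_
  rw [prod_mul_distrib, prod_const, prod_const, ← signChar_sum, card_univ_sdiff, Fintype.card_fin]
  ring

theorem prod_add_mul_signChar_eq_pow_wt (a b : ℤ) (c : Fin n → ZMod 2) :
    ∏ i, (a + b * signChar (c i)) = (a + b) ^ (n - wt c) * (a - b) ^ wt c := by
  have hcard : #(univ.filter fun i => c i = 0) + wt c = n := by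
    simpa [wt] using card_filter_add_card_filter_not (s := (univ : Finset (Fin n))) (c · = 0)
  calc ∏ i, (a + b * signChar (c i)) = ∏ i, if c i = 0 then a + b else a - b := by
        refine prod_congr rfl fun i _ => ?_
        unfold signChar
        split_ifs <;> ring
    _ = (a + b) ^ (n - wt c) * (a - b) ^ wt c := by
        rw [prod_ite, prod_const, prod_const]
        congr 2
        omega

theorem sum_wt_le_of_ne_zero_ne_one (C : Submodule (ZMod 2) (Fin n → ZMod 2)) [Fintype C]
    (T : ℕ → ℤ) (M : ℤ) (hn : n ≠ 0) (hone : (fun _ => (1 : ZMod 2)) ∈ C)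
    (hT : ∀ c ∈ C, c ≠ 0 → c ≠ (fun _ => 1) → T (wt c) ≤ M) :
    ∑ c : C, T (wt (c : Fin n → ZMod 2)) ≤ T 0 + T n + (Fintype.card C - 2 : ℕ) * M := by
  set o : C := ⟨fun _ => 1, hone⟩
  have hne : (0 : C) ≠ o := by
    intro h
    simpa [o] using congrFun (congrArg Subtype.val h) ⟨0, Nat.pos_of_ne_zero hn⟩
  have hrest : ∑ c ∈ univ \ {0, o}, T (wt (c : Fin n → ZMod 2)) ≤ #(univ \ {0, o}) • M := by
    refine sum_le_card_nsmul _ _ _ fun c hc => ?_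
    simp only [mem_sdiff, mem_insert, mem_singleton, mem_univ, true_and, not_or] at hc
    exact hT c c.2 (by simpa using hc.1) fun h => hc.2 (Subtype.ext h)
  rw [card_univ_sdiff, card_pair hne, nsmul_eq_mul] at hrest
  rw [← sum_sdiff (subset_univ {0, o}), sum_pair hne]
  simp only [o, ZeroMemClass.coe_zero, wt_zero, wt_one]
  linarith

section LinearProgramming

variable {ι : Type*} [Fintype ι]

def lpValue (a : ℤ) (lam b : ι → ℤ) (n w : ℕ) : ℤ :=
  ∑ r, lam r * ((a + b r) ^ (n - w) * (a - b r) ^ w)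

def lpCoeff (a : ℤ) (lam b : ι → ℤ) (n u : ℕ) : ℤ :=
  ∑ r, lam r * (a ^ (n - u) * b r ^ u)

-- `lpCoeff a lam b n u` is the coefficient of the Krawtchouk polynomial `K_u` in `lpValue a lam b n`
theorem lpValue_wt_eq_sum_powerset (a : ℤ) (lam b : ι → ℤ) (c : Fin n → ZMod 2) :
    lpValue a lam b n (wt c) =
      ∑ S ∈ univ.powerset, lpCoeff a lam b n #S * signChar (∑ i ∈ S, c i) := by
  simp_rw [lpValue, ← prod_add_mul_signChar_eq_pow_wt, prod_add_mul_signChar_eq_sum_powerset,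
    mul_sum, lpCoeff, sum_mul]
  rw [sum_comm]
  exact sum_congr rfl fun S _ => sum_congr rfl fun r _ => by ring

theorem sum_lpValue_wt_nonneg (C : Submodule (ZMod 2) (Fin n → ZMod 2)) [Fintype C] (a : ℤ)
    (lam b : ι → ℤ) (hq : ∀ u ≤ n, 0 ≤ lpCoeff a lam b n u) :
    0 ≤ ∑ c : C, lpValue a lam b n (wt (c : Fin n → ZMod 2)) := by
  simp_rw [lpValue_wt_eq_sum_powerset]
  rw [sum_comm]
  refine sum_nonneg fun S _ => ?_
  rw [← mul_sum]
  refine mul_nonneg (hq _ ((card_le_univ S).trans_eq (Fintype.card_fin n))) ?_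
  exact sum_signChar_nonneg <| AddMonoidHom.mk' (fun c : C => ∑ i ∈ S, (c : Fin n → ZMod 2) i)
    fun x y => by simp [sum_add_distrib]

end LinearProgramming

def certLam : Fin 17 → ℤ :=
  ![-255493744867,
    202621553063, 202621553063,
    -98711117749, -98711117749,
    27137002159, 27137002159,
    -3347860833, -3347860833,
    48176192, 48176192,
    -881075, -881075,
    678, 678,
    20, 20]

def certB : Fin 17 → ℤ :=
  ![0, 1, -1, 2, -2, 3, -3, 4, -4, 6, -6, 8, -8, 12, -12, 16, -16]

theorem lpCoeff_cert_nonneg : ∀ u ≤ 48, 0 ≤ lpCoeff 32 certLam certB 48 u := by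
  decide

theorem lpValue_cert_le :
    ∀ w ∈ ({16, 20, 24, 28, 32} : Finset ℕ),
      lpValue 32 certLam certB 48 w ≤ lpValue 32 certLam certB 48 16 := by
  decide

theorem lpValue_cert_lt :
    lpValue 32 certLam certB 48 0 + lpValue 32 certLam certB 48 48 +
      (2 ^ 17 - 2 : ℕ) * lpValue 32 certLam certB 48 16 < 0 := by
  decide

end BinaryCode

open BinaryCode

/-- There is no binary [48,17] self-complementary code all of whose nonzero
codewords have weight in {16, 20, 24, 28, 32, 48}. -/
theorem stmt_1 :
    ¬ ∃ C : Submodule (ZMod 2) (Fin 48 → ZMod 2),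
      Module.finrank (ZMod 2) C = 17 ∧ (fun _ => (1 : ZMod 2)) ∈ C ∧
      ∀ c ∈ C, c ≠ 0 → wt c ∈ ({16, 20, 24, 28, 32, 48} : Set ℕ) := by
  classical
  rintro ⟨C, hrank, hone, hwt⟩
  have hcard : Fintype.card C = 2 ^ 17 := by
    rw [Module.card_eq_pow_finrank (K := ZMod 2), ZMod.card, hrank]
  have hlow := sum_lpValue_wt_nonneg C 32 certLam certB lpCoeff_cert_nonneg
  have hup := sum_wt_le_of_ne_zero_ne_one C (lpValue 32 certLam certB 48)
    (lpValue 32 certLam certB 48 16) (by norm_num) hone fun c hc h0 h1 => by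
      have h48 : wt c ≠ 48 := fun h => h1 (eq_one_of_wt_eq h)
      have hw := hwt c hc h0
      apply lpValue_cert_le
      simp only [Set.mem_insert_iff, Set.mem_singleton_iff] at hw
      simp only [Finset.mem_insert, Finset.mem_singleton]
      omega
  rw [hcard] at hup
  linarith [lpValue_cert_lt]
end

section
/- There does not exist a binary linear [48,17] code all of whose nonzero codewords have Hamming weight in the set {16, 20, 24, 28, 32, 36}. -/
/-!
For every subset `S` of the coordinates, `c ↦ (-1) ^ (∑ i ∈ S, c i)` is a character of the
additive group `C`, so its sum over `C` is `|C|` or `0`. Summing over `|S| = j` turns this into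
`∑ c ∈ C, K_j (wt c) ≥ 0` for the Krawtchouk polynomials `K_j`, i.e. the dual weight distribution
of `C` is nonnegative. A nonnegative combination `f = ∑ a_j K_j` that is `≤ m` on all admissible
weights then gives `0 ≤ f 0 + (|C| - 1) m` (Delsarte's linear programming bound); for the
parameters `[48, 17]` an explicit `f` violates this.
-/

open Polynomial Finset

lemma AddChar.map_finsetSum {ι A M : Type*} [AddCommMonoid A] [CommMonoid M] (ψ : AddChar A M)
    (s : Finset ι) (f : ι → A) : ψ (∑ i ∈ s, f i) = ∏ i ∈ s, ψ (f i) := by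
  have := map_prod ψ.toMonoidHom (fun i => Multiplicative.ofAdd (f i)) s
  rwa [← ofAdd_sum] at this

def signChar : AddChar (ZMod 2) ℤ := AddChar.zmodChar 2 (by norm_num : (-1 : ℤ) ^ 2 = 1)

lemma signChar_apply (x : ZMod 2) : signChar x = if x = 0 then 1 else -1 := by
  fin_cases x <;> rfl

lemma sum_signChar_sum_nonneg {ι : Type*} (C : Submodule (ZMod 2) (ι → ZMod 2)) [Fintype C]
    (S : Finset ι) : 0 ≤ ∑ c : C, signChar (∑ i ∈ S, (c : ι → ZMod 2) i) := by
  classical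
  let φ : C →+ ZMod 2 :=
    AddMonoidHom.mk' (fun c => ∑ i ∈ S, (c : ι → ZMod 2) i) fun c d => by simp [sum_add_distrib]
  change 0 ≤ ∑ c : C, signChar.compAddMonoidHom φ c
  rw [AddChar.sum_eq_ite]
  positivity

def krawtchouk (n j w : ℕ) : ℤ :=
  ∑ t ∈ range (j + 1), (-1) ^ t * w.choose t * (n - w).choose (j - t)

lemma coeff_one_sub_X_pow (w t : ℕ) : ((1 - X : ℤ[X]) ^ w).coeff t = (-1) ^ t * w.choose t := by
  have h : (1 - X : ℤ[X]) ^ w = C ((-1) ^ w) * (X + C (-1)) ^ w := by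
    rw [C_pow, ← mul_pow, C_neg, C_1]; ring
  rw [h, coeff_C_mul, coeff_X_add_C_pow]
  rcases le_or_gt t w with hle | hlt
  · obtain ⟨k, rfl⟩ := Nat.exists_eq_add_of_le hle
    rw [Nat.add_sub_cancel_left, ← mul_assoc, ← pow_add,
      show t + k + k = t + 2 * k by ring, pow_add, pow_mul]
    norm_num
  · simp [Nat.choose_eq_zero_of_lt hlt]

lemma coeff_one_sub_X_pow_mul_one_add_X_pow (n w j : ℕ) :
    ((1 - X : ℤ[X]) ^ w * (1 + X) ^ (n - w)).coeff j = krawtchouk n j w := by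
  rw [coeff_mul, Nat.sum_antidiagonal_eq_sum_range_succ_mk, krawtchouk]
  refine sum_congr rfl fun t _ => ?_
  rw [coeff_one_sub_X_pow, coeff_one_add_X_pow, mul_assoc]

lemma coeff_prod_one_add_C_mul_X {ι R : Type*} [CommSemiring R] (s : Finset ι) (a : ι → R)
    (j : ℕ) : (∏ i ∈ s, (1 + C (a i) * X)).coeff j = ∑ t ∈ s.powersetCard j, ∏ i ∈ t, a i := by
  classical
  simp_rw [prod_one_add, prod_mul_distrib, prod_const, ← map_prod, finsetSum_coeff,
    coeff_C_mul_X_pow, powersetCard_eq_filter, sum_filter]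
  exact sum_congr rfl fun t _ => by split_ifs <;> simp_all [eq_comm]

lemma prod_one_add_signChar_mul_X {n : ℕ} (c : Fin n → ZMod 2) :
    ∏ i, (1 + C (signChar (c i)) * X) = (1 - X : ℤ[X]) ^ wt c * (1 + X) ^ (n - wt c) := by
  have hcompl : #{i | c i = 0} = n - wt c := by
    have := card_filter_add_card_filter_not (s := univ) (fun i => c i ≠ 0)
    simp only [not_not, card_univ, Fintype.card_fin] at this
    rw [wt]; omega
  have hterm : ∀ i, 1 + C (signChar (c i)) * X = if c i = 0 then 1 + X else 1 - X := by
    intro i; rw [signChar_apply]; split_ifs <;> simp [sub_eq_add_neg]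
  rw [prod_congr rfl fun i _ => hterm i, prod_ite, prod_const, prod_const, hcompl, mul_comm]
  rfl

lemma sum_powersetCard_prod_signChar {n : ℕ} (c : Fin n → ZMod 2) (j : ℕ) :
    ∑ S ∈ powersetCard j univ, ∏ i ∈ S, signChar (c i) = krawtchouk n j (wt c) := by
  rw [← coeff_prod_one_add_C_mul_X, prod_one_add_signChar_mul_X,
    coeff_one_sub_X_pow_mul_one_add_X_pow]

theorem sum_krawtchouk_wt_nonneg {n : ℕ} (C : Submodule (ZMod 2) (Fin n → ZMod 2)) [Fintype C]
    (j : ℕ) : 0 ≤ ∑ c : C, krawtchouk n j (wt (c : Fin n → ZMod 2)) := by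
  simp_rw [← sum_powersetCard_prod_signChar, ← AddChar.map_finsetSum]
  rw [sum_comm]
  exact sum_nonneg fun S _ => sum_signChar_sum_nonneg C S

theorem delsarte_bound {n N : ℕ} (C : Submodule (ZMod 2) (Fin n → ZMod 2)) [Fintype C]
    (a : Fin N → ℤ) (ha : ∀ j, 0 ≤ a j) (m : ℤ)
    (hm : ∀ c ∈ C, c ≠ 0 → ∑ j, a j * krawtchouk n j (wt c) ≤ m) :
    0 ≤ ∑ j, a j * krawtchouk n j 0 + (Fintype.card C - 1) * m := by
  classical
  set f : ℕ → ℤ := fun w => ∑ j, a j * krawtchouk n j w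
  have hsum : 0 ≤ ∑ c : C, f (wt (c : Fin n → ZMod 2)) := by
    rw [sum_comm]
    exact sum_nonneg fun j _ => by
      rw [← mul_sum]; exact mul_nonneg (ha j) (sum_krawtchouk_wt_nonneg C j)
  have hnonzero :
      ∑ c ∈ univ.erase (0 : C), f (wt (c : Fin n → ZMod 2)) ≤ (Fintype.card C - 1) * m := by
    have := sum_le_card_nsmul (univ.erase (0 : C)) (fun c => f (wt (c : Fin n → ZMod 2))) m
      fun c hc => hm c c.2 (by simpa using ne_of_mem_erase hc)
    rwa [card_erase_of_mem (mem_univ _), card_univ, nsmul_eq_mul,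
      Nat.cast_sub Fintype.card_pos, Nat.cast_one] at this
  have hwt0 : wt (0 : Fin n → ZMod 2) = 0 := by simp [wt]
  rw [← add_sum_erase _ _ (mem_univ 0), ZeroMemClass.coe_zero, hwt0] at hsum
  linarith

lemma krawtchouk_certificate :
    ∀ w ∈ ({16, 20, 24, 28, 32, 36} : Set ℕ),
      ∑ j : Fin 7, ![0, 136, 65, 28, 12, 4, 1] j * krawtchouk 48 j w = -272 := by
  rintro w (rfl | rfl | rfl | rfl | rfl | rfl) <;> decide

/-- There is no binary [48,17] code all of whose nonzero codewords have
weight in {16, 20, 24, 28, 32, 36}. -/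
theorem stmt_2 :
    ¬ ∃ C : Submodule (ZMod 2) (Fin 48 → ZMod 2),
      Module.finrank (ZMod 2) C = 17 ∧
      ∀ c ∈ C, c ≠ 0 → wt c ∈ ({16, 20, 24, 28, 32, 36} : Set ℕ) := by
  rintro ⟨C, hrank, hwt⟩
  have := Fintype.ofFinite C
  have hcard : Fintype.card C = 2 ^ 17 := by
    rw [Module.card_eq_pow_finrank (K := ZMod 2), hrank, ZMod.card]
  -- `136 K₁ + 65 K₂ + 28 K₃ + 12 K₄ + 4 K₅ + K₆` is `-272` on the admissible weights but only
  -- `22019824 < 272 * (2 ^ 17 - 1)` at `0`.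
  have hbound := delsarte_bound C ![0, 136, 65, 28, 12, 4, 1] (by decide) (-272)
    fun c hc hc0 => (krawtchouk_certificate (wt c) (hwt c hc hc0)).le
  rw [hcard] at hbound
  revert hbound
  decide
end

section
/- Let C be an [n,k] binary linear code and suppose that for some index j with 0 < j < k, the j-th entry of the optimum distance profile of C in dictionary order, ODP^dic[C]_j, is the first entry (reading from index k downward) strictly greater than d(C). Then j equals the maximum dimension of a subcode of C with minimum distance ODP^dic[C]_j; i.e., C has no subcode of dimension j+1 with that minimum distance. -/
/-- A subcode chain `C = D 0 ⊃ D 1 ⊃ ⋯ ⊃ D (k-1)` with `dim (D i) = k - i`. -/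
def IsSubcodeChain {n : ℕ} (k : ℕ) (C : Submodule (ZMod 2) (Fin n → ZMod 2))
    (D : ℕ → Submodule (ZMod 2) (Fin n → ZMod 2)) : Prop :=
  D 0 = C ∧ (∀ i < k, Module.finrank (ZMod 2) (D i) = k - i) ∧
    ∀ i, i + 1 < k → D (i + 1) < D i

/-- `a` is an upper bound on `b` in the dictionary order (on the first `k` entries). -/
def DicUB (k : ℕ) (a b : ℕ → ℕ) : Prop :=
  (∀ i < k, a i = b i) ∨ ∃ t < k, (∀ i < t, a i = b i) ∧ b t < a t

/-- `a` is an upper bound on `b` in the inverse dictionary order (on the first `k` entries). -/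
def InvUB (k : ℕ) (a b : ℕ → ℕ) : Prop :=
  (∀ i < k, a i = b i) ∨ ∃ t < k, (∀ i, t < i → i < k → a i = b i) ∧ b t < a t

/-- `p` is the optimum distance profile of `C` in the dictionary order:
it is the distance profile of some subcode chain and an upper bound, in the
dictionary order, on the distance profile of every subcode chain.
(Entries beyond the code's dimension are normalized to `0`.) -/
def IsODPdic {n : ℕ} (k : ℕ) (C : Submodule (ZMod 2) (Fin n → ZMod 2)) (p : ℕ → ℕ) : Prop :=
  (∃ D, IsSubcodeChain k C D ∧ ∀ i < k, p i = minDist (D i)) ∧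
  (∀ i, k ≤ i → p i = 0) ∧
  ∀ D, IsSubcodeChain k C D → DicUB k p (fun i => minDist (D i))

/-- `p` is the optimum distance profile of `C` in the inverse dictionary order. -/
def IsODPinv {n : ℕ} (k : ℕ) (C : Submodule (ZMod 2) (Fin n → ZMod 2)) (p : ℕ → ℕ) : Prop :=
  (∃ D, IsSubcodeChain k C D ∧ ∀ i < k, p i = minDist (D i)) ∧
  (∀ i, k ≤ i → p i = 0) ∧
  ∀ D, IsSubcodeChain k C D → InvUB k p (fun i => minDist (D i))

open Module

namespace Submodule

variable {K V : Type*} [DivisionRing K] [AddCommGroup V] [Module K V] [FiniteDimensional K V]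

theorem exists_finrank_eq_of_le {A C : Submodule K V} (hAC : A ≤ C) {m : ℕ}
    (hAm : finrank K A ≤ m) (hmC : m ≤ finrank K C) :
    ∃ H, A ≤ H ∧ H ≤ C ∧ finrank K H = m := by
  obtain ⟨d, hd⟩ := Nat.exists_eq_add_of_le hAm
  induction d generalizing A with
  | zero => exact ⟨A, le_rfl, hAC, hd.symm⟩
  | succ d ih =>
    have hAC' : A < C := lt_of_le_of_ne hAC (by rintro rfl; omega)
    obtain ⟨x, hxC, hxA⟩ := SetLike.exists_of_lt hAC'
    have hrank := finrank_sup_span_singleton hxA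
    have hxC' : span K {x} ≤ C := (span_singleton_le_iff_mem x C).2 hxC
    obtain ⟨H, hAH, hHC, hH⟩ :=
      ih (A := A ⊔ span K {x}) (sup_le hAC hxC') (by omega) (by omega)
    exact ⟨H, le_sup_left.trans hAH, hHC, hH⟩

theorem exists_descending_chain_through {S C : Submodule K V} (hSC : S ≤ C) :
    ∃ D : ℕ → Submodule K V, D 0 = C ∧ D (finrank K C - finrank K S) = S ∧
      (∀ i, D (i + 1) ≤ D i) ∧ ∀ i, finrank K (D i) = finrank K C - i := by
  obtain ⟨m, hm⟩ : ∃ m, finrank K C = m := ⟨_, rfl⟩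
  induction m generalizing S C with
  | zero =>
    have hC : C = ⊥ := finrank_eq_zero.1 hm
    have hS : S = ⊥ := eq_bot_iff.2 (hC ▸ hSC)
    exact ⟨fun _ => ⊥, hC.symm, hS.symm, fun _ => le_rfl, by simp [hm]⟩
  | succ m ih =>
    obtain ⟨D', hD'C, hD'step, hD'rank, hD'S⟩ : ∃ D' : ℕ → Submodule K V, D' 0 ≤ C ∧
        (∀ i, D' (i + 1) ≤ D' i) ∧ (∀ i, finrank K (D' i) = m - i) ∧
        (S = C ∨ finrank K S ≤ m ∧ D' (m - finrank K S) = S) := by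
      by_cases hS : S = C
      · obtain ⟨H, -, hHC, hH⟩ := exists_finrank_eq_of_le (m := m) (bot_le : ⊥ ≤ C)
          (by simp) (by omega)
        obtain ⟨D', hD'0, -, hD'step, hD'rank⟩ := ih (le_refl H) hH
        exact ⟨D', hD'0 ▸ hHC, hD'step, hH ▸ hD'rank, .inl hS⟩
      · have hSm : finrank K S ≤ m := by
          have := finrank_lt_finrank_of_lt (lt_of_le_of_ne hSC hS); omega
        obtain ⟨H, hSH, hHC, hH⟩ := exists_finrank_eq_of_le hSC hSm (by omega)
        obtain ⟨D', hD'0, hD'S, hD'step, hD'rank⟩ := ih hSH hH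
        exact ⟨D', hD'0 ▸ hHC, hD'step, hH ▸ hD'rank, .inr ⟨hSm, hH ▸ hD'S⟩⟩
    refine ⟨fun | 0 => C | i + 1 => D' i, rfl, ?_, ?_, ?_⟩
    · rcases hD'S with rfl | ⟨hSm, hD'S⟩
      · simp
      · rw [hm, show m + 1 - finrank K S = (m - finrank K S) + 1 by omega]
        exact hD'S
    · rintro (_ | i)
      · exact hD'C
      · exact hD'step i
    · rintro (_ | i)
      · simp [hm]
      · simp [hm, hD'rank]

end Submodule

section

variable {n : ℕ}

theorem minDist_le_minDist_of_le {A B : Submodule (ZMod 2) (Fin n → ZMod 2)} (hAB : A ≤ B)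
    (hA : A ≠ ⊥) : minDist B ≤ minDist A := by
  obtain ⟨a, haA, ha0⟩ := Submodule.exists_mem_ne_zero_of_ne_bot hA
  obtain ⟨c, hcA, hc0, hc⟩ := Nat.sInf_mem (⟨wt a, a, haA, ha0, rfl⟩ :
    {w | ∃ c ∈ A, c ≠ 0 ∧ wt c = w}.Nonempty)
  exact Nat.sInf_le ⟨c, hAB hcA, hc0, hc⟩

theorem exists_isSubcodeChain_through {k : ℕ} {S C : Submodule (ZMod 2) (Fin n → ZMod 2)}
    (hSC : S ≤ C) (hk : finrank (ZMod 2) C = k) :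
    ∃ D, IsSubcodeChain k C D ∧ D (k - finrank (ZMod 2) S) = S := by
  obtain ⟨D, hD0, hDS, hDstep, hDrank⟩ := Submodule.exists_descending_chain_through hSC
  subst hk
  refine ⟨D, ⟨hD0, fun i _ => hDrank i, fun i _ => lt_of_le_of_ne (hDstep i) ?_⟩, hDS⟩
  exact ne_of_apply_ne (fun T : Submodule (ZMod 2) (Fin n → ZMod 2) => finrank (ZMod 2) T)
    (by rw [hDrank, hDrank]; omega)

namespace IsSubcodeChain

variable {k : ℕ} {C : Submodule (ZMod 2) (Fin n → ZMod 2)}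
  {D : ℕ → Submodule (ZMod 2) (Fin n → ZMod 2)}

theorem anti (hD : IsSubcodeChain k C D) {a b : ℕ} (hab : a ≤ b) (hb : b < k) :
    D b ≤ D a := by
  induction b, hab using Nat.le_induction with
  | base => exact le_rfl
  | succ b _ ih => exact (hD.2.2 b hb).le.trans (ih (by omega))

theorem ne_bot (hD : IsSubcodeChain k C D) {i : ℕ} (hi : i < k) : D i ≠ ⊥ := by
  intro h
  have := hD.2.1 i hi
  rw [h, finrank_bot] at this
  omega

theorem minDist_le_minDist (hD : IsSubcodeChain k C D) {a b : ℕ} (hab : a ≤ b) (hb : b < k) :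
    minDist (D a) ≤ minDist (D b) :=
  minDist_le_minDist_of_le (hD.anti hab hb) (hD.ne_bot hb)

end IsSubcodeChain

theorem DicUB.exists_lt_of_lt {k : ℕ} {a b : ℕ → ℕ} (h : DicUB k a b) {i : ℕ} (hi : i < k)
    (hlt : a i < b i) : ∃ t < i, b t < a t := by
  rcases h with heq | ⟨t, -, hpre, hbt⟩
  · exact absurd (heq i hi) hlt.ne
  · refine ⟨t, ?_, hbt⟩
    by_contra! hit
    rcases hit.lt_or_eq with hit | rfl
    · exact hlt.ne (hpre i hit)
    · omega

end

/-- If the ODP entry at dimension j (chain index k - j) is the first entry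
greater than d(C), then j is the maximum dimension of a subcode of C with that
minimum distance; in particular C has no subcode of dimension j+1 with it. -/
theorem stmt_11 (n k j : ℕ) (C : Submodule (ZMod 2) (Fin n → ZMod 2))
    (hk : Module.finrank (ZMod 2) C = k) (p : ℕ → ℕ) (hp : IsODPdic k C p)
    (hj0 : 0 < j) (hjk : j < k)
    (h1 : p (k - (j + 1)) = minDist C) (h2 : minDist C < p (k - j)) :
    (∃ S : Submodule (ZMod 2) (Fin n → ZMod 2), S ≤ C ∧
      Module.finrank (ZMod 2) S = j ∧ minDist S = p (k - j)) ∧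
    ¬ ∃ S : Submodule (ZMod 2) (Fin n → ZMod 2), S ≤ C ∧
      Module.finrank (ZMod 2) S = j + 1 ∧ minDist S = p (k - j) := by
  obtain ⟨⟨E, hE, hpE⟩, -, hpUB⟩ := hp
  constructor
  · have hEC : E (k - j) ≤ C := hE.1 ▸ hE.anti (Nat.zero_le _) (by omega)
    refine ⟨E (k - j), hEC, ?_, (hpE _ (by omega)).symm⟩
    rw [hE.2.1 _ (by omega)]
    omega
  rintro ⟨S, hSC, hSrank, hSd⟩
  obtain ⟨D, hD, hDS⟩ := exists_isSubcodeChain_through hSC hk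
  rw [hSrank] at hDS
  obtain ⟨t, ht, hDt⟩ := (hpUB D hD).exists_lt_of_lt (i := k - (j + 1)) (by omega)
    (by simp only [hDS, hSd]; omega)
  have hpt : p t ≤ p (k - (j + 1)) := by
    rw [hpE t (by omega), hpE _ (by omega)]
    exact hE.minDist_le_minDist ht.le (by omega)
  have hCt : minDist C ≤ minDist (D t) :=
    hD.1 ▸ hD.minDist_le_minDist (Nat.zero_le t) (by omega)
  omega
end

section
/- The binary code of length 6 generated by the rows (1,1,1,1,0,0), (1,1,0,0,1,1), (1,0,0,0,0,0) has dimension 3 and contains a 2-dimensional subcode of minimum distance 4 (spanned by the first two rows) and a 2-dimensional subcode of minimum distance 3 (spanned by (0,1,1,1,0,0) and (0,1,0,0,1,1)); hence two distinct minimum distances (3 and 4) can both have maximum subcode dimension 2 in the same code. -/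
def v1 : Fin 6 → ZMod 2 := ![1, 1, 1, 1, 0, 0]
def v2 : Fin 6 → ZMod 2 := ![1, 1, 0, 0, 1, 1]
def v3 : Fin 6 → ZMod 2 := ![1, 0, 0, 0, 0, 0]
def w1 : Fin 6 → ZMod 2 := ![0, 1, 1, 1, 0, 0]
def w2 : Fin 6 → ZMod 2 := ![0, 1, 0, 0, 1, 1]

section Span

variable {R M : Type*} [Ring R] [Nontrivial R] [StrongRankCondition R] [AddCommGroup M] [Module R M]

theorem finrank_span_pair_eq_two {a b : M} (h : LinearIndependent R ![a, b]) :
    Module.finrank R (Submodule.span R ({a, b} : Set M)) = 2 := by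
  rw [← Matrix.range_cons_cons_empty a b ![], finrank_span_eq_card h, Fintype.card_fin]

theorem finrank_span_triple_eq_three {a b c : M} (h : LinearIndependent R ![a, b, c]) :
    Module.finrank R (Submodule.span R ({a, b, c} : Set M)) = 3 := by
  rw [← Set.singleton_union, ← Matrix.range_cons_cons_empty b c ![], ← Matrix.range_cons,
    finrank_span_eq_card h, Fintype.card_fin]

end Span

section MinDist

variable {n : ℕ}

theorem wt_eq_hammingNorm (x : Fin n → ZMod 2) : wt x = hammingNorm x := rfl

theorem minDist_eq_one {C : Submodule (ZMod 2) (Fin n → ZMod 2)} {c : Fin n → ZMod 2}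
    (hc : c ∈ C) (hwt : wt c = 1) : minDist C = 1 := by
  have hc0 : c ≠ 0 := by rintro rfl; simp [wt_eq_hammingNorm] at hwt
  refine le_antisymm (Nat.sInf_le ⟨c, hc, hc0, hwt⟩) (le_csInf ⟨1, c, hc, hc0, hwt⟩ ?_)
  rintro w ⟨d, -, hd0, rfl⟩
  exact hammingNorm_pos_iff.mpr hd0

theorem minDist_span_pair {a b : Fin n → ZMod 2} (ha : a ≠ 0) (hb : b ≠ 0) (hab : a + b ≠ 0) :
    minDist (Submodule.span (ZMod 2) ({a, b} : Set (Fin n → ZMod 2))) =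
      min (wt a) (min (wt b) (wt (a + b))) := by
  have hweights : {w | ∃ c ∈ Submodule.span (ZMod 2) ({a, b} : Set (Fin n → ZMod 2)),
      c ≠ 0 ∧ wt c = w} = {wt a, wt b, wt (a + b)} := by
    ext w
    simp only [Submodule.mem_span_pair, Set.mem_insert_iff, Set.mem_singleton_iff]
    constructor
    · rintro ⟨c, ⟨r, s, rfl⟩, hc0, rfl⟩
      have hbit : ∀ x : ZMod 2, x = 0 ∨ x = 1 := by decide
      rcases hbit r with rfl | rfl <;> rcases hbit s with rfl | rfl <;> simp_all
    · rintro (rfl | rfl | rfl)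
      exacts [⟨a, ⟨1, 0, by simp⟩, ha, rfl⟩, ⟨b, ⟨0, 1, by simp⟩, hb, rfl⟩,
        ⟨a + b, ⟨1, 1, by simp⟩, hab, rfl⟩]
  rw [minDist, hweights]
  simp [csInf_insert]

end MinDist

/-- In the [6,3,1] code spanned by v1, v2, v3 the minimum distances 4 and 3 both
have maximum subcode dimension 2. -/
theorem stmt_14 :
    Module.finrank (ZMod 2)
      (Submodule.span (ZMod 2) ({v1, v2, v3} : Set (Fin 6 → ZMod 2))) = 3 ∧
    minDist (Submodule.span (ZMod 2) ({v1, v2, v3} : Set (Fin 6 → ZMod 2))) = 1 ∧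
    Submodule.span (ZMod 2) ({v1, v2} : Set (Fin 6 → ZMod 2)) ≤
      Submodule.span (ZMod 2) ({v1, v2, v3} : Set (Fin 6 → ZMod 2)) ∧
    Module.finrank (ZMod 2)
      (Submodule.span (ZMod 2) ({v1, v2} : Set (Fin 6 → ZMod 2))) = 2 ∧
    minDist (Submodule.span (ZMod 2) ({v1, v2} : Set (Fin 6 → ZMod 2))) = 4 ∧
    Submodule.span (ZMod 2) ({w1, w2} : Set (Fin 6 → ZMod 2)) ≤
      Submodule.span (ZMod 2) ({v1, v2, v3} : Set (Fin 6 → ZMod 2)) ∧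
    Module.finrank (ZMod 2)
      (Submodule.span (ZMod 2) ({w1, w2} : Set (Fin 6 → ZMod 2))) = 2 ∧
    minDist (Submodule.span (ZMod 2) ({w1, w2} : Set (Fin 6 → ZMod 2))) = 3 ∧
    (¬ ∃ S ≤ Submodule.span (ZMod 2) ({v1, v2, v3} : Set (Fin 6 → ZMod 2)),
      Module.finrank (ZMod 2) S = 3 ∧ minDist S = 4) ∧
    (¬ ∃ S ≤ Submodule.span (ZMod 2) ({v1, v2, v3} : Set (Fin 6 → ZMod 2)),
      Module.finrank (ZMod 2) S = 3 ∧ minDist S = 3) ∧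
    ∀ S ≤ Submodule.span (ZMod 2) ({v1, v2, v3} : Set (Fin 6 → ZMod 2)),
      Module.finrank (ZMod 2) S = 3 → ¬ 3 ≤ minDist S := by
  set C := Submodule.span (ZMod 2) ({v1, v2, v3} : Set (Fin 6 → ZMod 2))
  have hv3 : v3 ∈ C := Submodule.subset_span (by simp)
  have hC3 : Module.finrank (ZMod 2) C = 3 :=
    finrank_span_triple_eq_three (by rw [Fintype.linearIndependent_iff]; decide)
  have hC1 : minDist C = 1 := minDist_eq_one hv3 (by decide)
  have hsub : ∀ S ≤ C, Module.finrank (ZMod 2) S = 3 → minDist S = 1 := fun S hS h3 => by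
    rw [Submodule.eq_of_le_of_finrank_eq hS (h3.trans hC3.symm), hC1]
  have hw : Submodule.span (ZMod 2) ({w1, w2} : Set (Fin 6 → ZMod 2)) ≤ C := by
    rw [Submodule.span_le, Set.insert_subset_iff, Set.singleton_subset_iff,
      show w1 = v1 + v3 by decide, show w2 = v2 + v3 by decide]
    exact ⟨C.add_mem (Submodule.subset_span (by simp)) hv3,
      C.add_mem (Submodule.subset_span (by simp)) hv3⟩
  refine ⟨hC3, hC1, Submodule.span_mono (by simp [Set.insert_subset_iff]),
    finrank_span_pair_eq_two (by rw [Fintype.linearIndependent_iff]; decide),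
    by rw [minDist_span_pair (by decide) (by decide) (by decide)]; decide, hw,
    finrank_span_pair_eq_two (by rw [Fintype.linearIndependent_iff]; decide),
    by rw [minDist_span_pair (by decide) (by decide) (by decide)]; decide, ?_, ?_, ?_⟩
  · rintro ⟨S, hS, h3, h4⟩
    simp [hsub S hS h3] at h4
  · rintro ⟨S, hS, h3, h3'⟩
    simp [hsub S hS h3] at h3'
  · intro S hS h3
    simp [hsub S hS h3]
end
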